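/- For every integer N ≥ 1, the hard-dimer probability weights sum to one: P̃_N(0,0) + Σ_{t=1}^{N} Σ_{s=1}^{⌊t/2⌋} P̃_N(s,t) = 1; equivalently, Σ_{t=1}^{N} Σ_{s=1}^{⌊t/2⌋} P̃_N(s,t) = 1 - (2/3)^{N-1}. -/

import Mathlib

/-- The hard-dimer probability weights `P̃_N(s,t)`:
`P̃_N(0,0) = (2/3)^{N-1}`,
`P̃_N(s,t) = (2/3)^{N-1} · C(N-t+s, s) · C(t-s-1, s-1) · 2^{-(t-s)}`
for `1 ≤ s ≤ ⌊t/2⌋` and `1 ≤ t ≤ N`, and `P̃_N(s,t) = 0` otherwise. -/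
noncomputable def Ptilde (N s t : ℕ) : ℝ :=
  if s = 0 ∧ t = 0 then (2 / 3 : ℝ) ^ (N - 1)
  else if 1 ≤ s ∧ s ≤ t / 2 ∧ 1 ≤ t ∧ t ≤ N then
    (2 / 3 : ℝ) ^ (N - 1) * ((N - t + s).choose s : ℝ)
      * ((t - s - 1).choose (s - 1) : ℝ) * (1 / 2 : ℝ) ^ (t - s)
  else 0

/-!
Substituting `j = t - s`, the inner sum over `s` becomes Vandermonde's convolution
`∑ₛ C(N-j, s) C(j-1, s-1) = C(N-1, j)`, so the weights off `(0,0)` add up to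
`(2/3)^{N-1} ∑_{j ≥ 1} C(N-1, j) 2^{-j} = (2/3)^{N-1} ((3/2)^{N-1} - 1)` by the binomial theorem.
-/

open Finset

theorem sum_Icc_choose_mul_choose_sub_one (m j : ℕ) (hj : 1 ≤ j) :
    ∑ s ∈ Icc 1 j, m.choose s * (j - 1).choose (s - 1) = (m + (j - 1)).choose j := by
  rw [Nat.add_choose_eq, Nat.sum_antidiagonal_eq_sum_range_succ_mk, range_eq_Ico,
    sum_eq_sum_Ico_succ_bot (by omega), Nat.choose_eq_zero_of_lt (by omega : j - 1 < j - 0),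
    mul_zero, zero_add, zero_add, Nat.succ_eq_add_one, Ico_add_one_right_eq_Icc]
  refine sum_congr rfl fun s hs => ?_
  rw [mem_Icc] at hs
  rw [← Nat.choose_symm (by omega : s - 1 ≤ j - 1)]
  congr 2
  omega

theorem sum_Icc_choose_mul_pow {R : Type*} [CommRing R] (n : ℕ) (x : R) :
    ∑ j ∈ Icc 1 n, n.choose j * x ^ j = (1 + x) ^ n - 1 := by
  rw [add_comm, add_pow, range_eq_Ico, sum_eq_sum_Ico_succ_bot (by omega), zero_add,
    Ico_add_one_right_eq_Icc]
  simp [mul_comm]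

theorem sum_Icc_sum_Icc_div_two {M : Type*} [AddCommMonoid M] (N : ℕ) (f : ℕ → ℕ → M) :
    ∑ t ∈ Icc 1 N, ∑ s ∈ Icc 1 (t / 2), f s t
      = ∑ j ∈ Icc 1 (N - 1), ∑ s ∈ Icc 1 (min j (N - j)), f s (j + s) := by
  rw [sum_sigma', sum_sigma']
  refine sum_nbij' (fun p => ⟨p.1 - p.2, p.2⟩) (fun p => ⟨p.1 + p.2, p.2⟩) ?_ ?_ ?_ ?_ ?_
  all_goals simp only [mem_sigma, mem_Icc, Sigma.forall]
  · intro t s h; omega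
  · intro j s h; omega
  · intro t s h; simp only [Sigma.mk.injEq, heq_eq_eq, and_true]; omega
  · intro j s h; simp
  · intro t s h; congr; omega

/-- `C_N · P̃_N(s,t)` off `(0,0)`, with `C_N = (3/2)^{N-1}`. -/
noncomputable def dimerWeight (N s t : ℕ) : ℝ :=
  ((N - t + s).choose s : ℝ) * ((t - s - 1).choose (s - 1) : ℝ) * (1 / 2 : ℝ) ^ (t - s)

theorem sum_dimerWeight (N : ℕ) :
    ∑ t ∈ Icc 1 N, ∑ s ∈ Icc 1 (t / 2), dimerWeight N s t = (3 / 2 : ℝ) ^ (N - 1) - 1 := by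
  have inner : ∀ j ∈ Icc 1 (N - 1), ∑ s ∈ Icc 1 (min j (N - j)), dimerWeight N s (j + s)
      = ((N - 1).choose j : ℝ) * (1 / 2 : ℝ) ^ j := by
    intro j hj
    rw [mem_Icc] at hj
    -- the terms with `N - j < s` vanish, so the inner sum may run up to `j`
    have extend : ∑ s ∈ Icc 1 (min j (N - j)), dimerWeight N s (j + s)
        = ∑ s ∈ Icc 1 j, ((N - j).choose s * (j - 1).choose (s - 1) : ℕ) * (1 / 2 : ℝ) ^ j := by
      refine sum_subset_zero_on_sdiff (Icc_subset_Icc_right (min_le_left _ _)) ?_ ?_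
      · intro s hs
        simp only [mem_sdiff, mem_Icc] at hs
        rw [Nat.choose_eq_zero_of_lt (by omega : N - j < s)]
        simp
      · intro s hs
        rw [mem_Icc] at hs
        rw [dimerWeight, show N - (j + s) + s = N - j by omega, Nat.add_sub_cancel]
        push_cast
        ring
    rw [extend, ← sum_mul, ← Nat.cast_sum, sum_Icc_choose_mul_choose_sub_one _ _ hj.1,
      show N - j + (j - 1) = N - 1 by omega]
  rw [sum_Icc_sum_Icc_div_two, sum_congr rfl inner, sum_Icc_choose_mul_pow]
  norm_num

theorem Ptilde_eq_mul_dimerWeight {N s t : ℕ} (hs : 1 ≤ s) (hst : s ≤ t / 2) (ht : t ≤ N) :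
    Ptilde N s t = (2 / 3 : ℝ) ^ (N - 1) * dimerWeight N s t := by
  rw [Ptilde, if_neg (by omega), if_pos ⟨hs, hst, by omega, ht⟩, dimerWeight]
  ring

theorem Ptilde_sum_to_one_general (N : ℕ) :
    Ptilde N 0 0 + ∑ t ∈ Finset.Icc 1 N, ∑ s ∈ Finset.Icc 1 (t / 2), Ptilde N s t = 1 := by
  have hsum : ∑ t ∈ Icc 1 N, ∑ s ∈ Icc 1 (t / 2), Ptilde N s t
      = (2 / 3 : ℝ) ^ (N - 1) * ((3 / 2 : ℝ) ^ (N - 1) - 1) := by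
    rw [← sum_dimerWeight, mul_sum]
    refine sum_congr rfl fun t ht => ?_
    rw [mul_sum]
    refine sum_congr rfl fun s hs => ?_
    rw [mem_Icc] at ht hs
    exact Ptilde_eq_mul_dimerWeight hs.1 hs.2 ht.2
  rw [hsum, Ptilde, if_pos ⟨rfl, rfl⟩, mul_sub, ← mul_pow]
  norm_num

/-- the hard-dimer probability weights sum to one. -/
theorem Ptilde_sum_to_one (N : ℕ) (hN : 1 ≤ N) :
    Ptilde N 0 0 + ∑ t ∈ Finset.Icc 1 N, ∑ s ∈ Finset.Icc 1 (t / 2), Ptilde N s t = 1 :=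
  Ptilde_sum_to_one_general N
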